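/- arXiv:2408.10736 — 4 statements merged into one kernel-verified Lean document; each statement's English description precedes it below -/
import Mathlib

section
/- Let f : ℝ³ → [0,∞) be measurable with ∫_{ℝ³} |p| f(p) dp < ∞ and let h ∈ ℝ³. Then the function F is differentiable on the open subset of Sym3 consisting of positive definite matrices, and for every positive definite B ∈ Sym3 and every C ∈ Sym3 the derivative of F at B in direction C equals (det B)^{−1/2} · Σ_{i,j=1}^{3} [2Ψ(B)_{ij} − A_{ij} + (2/det A)((hᵀAh) A_{ij} − 2 (Ah)_i (Ah)_j)] C_{ij}, where A = B⁻¹. In particular, a positive definite B ∈ Sym3 is a critical point of F (i.e. all directional derivatives in symmetric directions vanish) if and only if the Fuchsian condition at B holds. -/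
open MeasureTheory Matrix Real Filter Topology Set Asymptotics

noncomputable section

/-- 3×3 real matrices; symmetric ones form `Sym3`, encoded via `Matrix.IsSymm`/`Matrix.PosDef`. -/
abbrev Mat3 := Matrix (Fin 3) (Fin 3) ℝ

/-- vectors in ℝ³ -/
abbrev Vec3 := Fin 3 → ℝ

/-- Euclidean norm on ℝ³. -/
def enorm3 (p : Vec3) : ℝ := Real.sqrt (∑ i, p i ^ 2)

/-- the quadratic form pᵀBp. -/
def quadForm (B : Mat3) (p : Vec3) : ℝ := p ⬝ᵥ B.mulVec p

/-- Ψ(B)_{ij} = 4π (det B)^{1/2} ∫ (pᵀBp)^{−1/2} p_i p_j f(p) dp. -/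
def PsiM (f : Vec3 → ℝ) (B : Mat3) : Mat3 :=
  Matrix.of fun i j =>
    (4 * π) * Real.sqrt B.det * ∫ p : Vec3, (Real.sqrt (quadForm B p))⁻¹ * (p i * p j * f p)

/-- χ_b(k)_{ij} = 4π (det b)^{1/2} ∫ (pᵀbp)^{−3/2} ((bp)ᵀ k (bp)) p_i p_j f(p) dp. -/
def chiM (f : Vec3 → ℝ) (b : Mat3) (k : Mat3) : Mat3 :=
  Matrix.of fun i j =>
    (4 * π) * Real.sqrt b.det *
      ∫ p : Vec3, ((Real.sqrt (quadForm b p))⁻¹ ^ 3) * (quadForm k (b.mulVec p) * (p i * p j * f p))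

/-- With u = ah, w = kh, α = hᵀah and b = a⁻¹:
M_a(k) = (2/det a)((hᵀkh) a + α k − 2(u wᵀ + w uᵀ) + tr(bk)(2 u uᵀ − α a)). -/
def MM (a : Mat3) (h : Vec3) (k : Mat3) : Mat3 :=
  (2 / a.det) • ((h ⬝ᵥ k.mulVec h) • a + (h ⬝ᵥ a.mulVec h) • k
    - (2:ℝ) • (vecMulVec (a.mulVec h) (k.mulVec h) + vecMulVec (k.mulVec h) (a.mulVec h))
    + (a⁻¹ * k).trace • ((2:ℝ) • vecMulVec (a.mulVec h) (a.mulVec h) - (h ⬝ᵥ a.mulVec h) • a))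

/-- The Fuchsian condition at B (with A = B⁻¹):
2Ψ(B) = A − (2/det A)((hᵀAh) A − 2 (Ah)(Ah)ᵀ). -/
def FuchsCond (f : Vec3 → ℝ) (h : Vec3) (B : Mat3) : Prop :=
  (2:ℝ) • PsiM f B =
    B⁻¹ - (2 / (B⁻¹).det) •
      ((h ⬝ᵥ (B⁻¹).mulVec h) • B⁻¹ - (2:ℝ) • vecMulVec ((B⁻¹).mulVec h) ((B⁻¹).mulVec h))

/-- F(B) = 16π ∫ (pᵀBp)^{1/2} f dp + 2 (det B)^{−1/2} + 4 (det B)^{1/2} hᵀB⁻¹h. -/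
def Ffun (f : Vec3 → ℝ) (h : Vec3) (B : Mat3) : ℝ :=
  16 * π * (∫ p : Vec3, Real.sqrt (quadForm B p) * f p)
    + 2 * (Real.sqrt B.det)⁻¹ + 4 * Real.sqrt B.det * (h ⬝ᵥ (B⁻¹).mulVec h)

/-!
Along the line `s ↦ B + s • C` every term of `F` is differentiable at `s = 0`. For the
integral, positive definiteness gives `pᵀ(B + sC)p ≥ c‖p‖²` uniformly for small `s`, so the
`s`-derivative `(pᵀCp) f(p) / (2 √(pᵀ(B + sC)p))` is dominated by a multiple of `‖p‖ f(p)` and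
may be taken under the integral; at `s = 0` it pairs `C` with `Ψ(B)`. For the other terms,
Jacobi's formula `(det)' = det B · tr(B⁻¹C)` and `(B⁻¹)' = -B⁻¹CB⁻¹` give the remaining entries
of the residual `2Ψ(B) - A + (2/det A)((hᵀAh) A - 2 (Ah)(Ah)ᵀ)`. This residual is symmetric, so
its pairing with every symmetric `C` vanishes exactly when it vanishes itself (take `C` equal to
it): that is the Fuchsian condition.
-/

section Matrix

variable {n : Type*}

lemma Matrix.isSymm_vecMulVec_self {α : Type*} [CommMagma α] (u : n → α) :
    (vecMulVec u u).IsSymm :=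
  transpose_vecMulVec u u

variable [Fintype n]

lemma smul_dotProduct_mulVec_smul (B : Matrix n n ℝ) (t : ℝ) (p : n → ℝ) :
    (t • p) ⬝ᵥ B *ᵥ (t • p) = t ^ 2 * (p ⬝ᵥ B *ᵥ p) := by
  simp only [mulVec_smul, dotProduct_smul, smul_dotProduct, smul_eq_mul]
  ring

lemma abs_dotProduct_mulVec_le (C : Matrix n n ℝ) (p : n → ℝ) :
    |p ⬝ᵥ C *ᵥ p| ≤ (∑ i, ∑ j, |C i j|) * ‖p‖ ^ 2 := by
  simp only [dotProduct, mulVec, Finset.mul_sum, Finset.sum_mul]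
  refine (Finset.abs_sum_le_sum_abs _ _).trans (Finset.sum_le_sum fun i _ => ?_)
  refine (Finset.abs_sum_le_sum_abs _ _).trans (Finset.sum_le_sum fun j _ => ?_)
  rw [abs_mul, abs_mul, sq]
  have hi : |p i| ≤ ‖p‖ := by simpa using norm_le_pi_norm p i
  have hj : |p j| ≤ ‖p‖ := by simpa using norm_le_pi_norm p j
  calc |p i| * (|C i j| * |p j|) = |C i j| * (|p i| * |p j|) := by ring
    _ ≤ |C i j| * (‖p‖ * ‖p‖) := by gcongr

theorem Matrix.PosDef.exists_pos_mul_norm_sq_le {B : Matrix n n ℝ} (hB : B.PosDef) :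
    ∃ c > 0, ∀ p : n → ℝ, c * ‖p‖ ^ 2 ≤ p ⬝ᵥ B *ᵥ p := by
  have hpos : ∀ p ∈ Metric.sphere (0 : n → ℝ) 1, 0 < p ⬝ᵥ B *ᵥ p := fun p hp => by
    simpa using hB.dotProduct_mulVec_pos (ne_zero_of_mem_unit_sphere ⟨p, hp⟩)
  obtain ⟨c, hc, hle⟩ := (isCompact_sphere (0 : n → ℝ) 1).exists_forall_le'
    (by fun_prop : Continuous fun p : n → ℝ => p ⬝ᵥ B *ᵥ p).continuousOn hpos
  refine ⟨c, hc, fun p => ?_⟩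
  rcases eq_or_ne p 0 with rfl | hp
  · simp
  have hnorm : 0 < ‖p‖ := norm_pos_iff.2 hp
  have := hle (‖p‖⁻¹ • p) (by simp [norm_smul, hnorm.ne'])
  rwa [smul_dotProduct_mulVec_smul, inv_pow, ← div_eq_inv_mul, le_div_iff₀ (by positivity)]
    at this

lemma Matrix.sum_sum_mul_apply_eq_trace_mul (M : Matrix n n ℝ) {C : Matrix n n ℝ}
    (hC : C.IsSymm) : ∑ i, ∑ j, M i j * C i j = (M * C).trace := by
  simp [trace, mul_apply, hC.apply]

lemma Matrix.forall_isSymm_sum_sum_mul_eq_zero_iff {M : Matrix n n ℝ} (hM : M.IsSymm) :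
    (∀ C : Matrix n n ℝ, C.IsSymm → ∑ i, ∑ j, M i j * C i j = 0) ↔ M = 0 := by
  refine ⟨fun hC => ?_, fun hM C _ => by simp [hM]⟩
  have hsq := hC M hM
  ext i j
  rw [Finset.sum_eq_zero_iff_of_nonneg fun i _ => Finset.sum_nonneg fun j _ =>
    mul_self_nonneg (M i j)] at hsq
  exact mul_self_eq_zero.1 <|
    (Finset.sum_eq_zero_iff_of_nonneg fun j _ => mul_self_nonneg (M i j)).1
      (hsq i (Finset.mem_univ i)) j (Finset.mem_univ j)

lemma Matrix.trace_vecMulVec_mulVec_mul {A : Matrix n n ℝ} (hA : A.IsSymm) (C : Matrix n n ℝ)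
    (h : n → ℝ) :
    (vecMulVec (A *ᵥ h) (A *ᵥ h) * C).trace = h ⬝ᵥ (A * C * A) *ᵥ h := by
  have hvecMul : h ᵥ* A = A *ᵥ h := by rw [← vecMul_transpose, hA.eq]
  rw [vecMulVec_mul, trace_vecMulVec, ← mulVec_mulVec, ← mulVec_mulVec, dotProduct_mulVec,
    hvecMul, dotProduct_mulVec, dotProduct_comm]

variable [DecidableEq n]

open Polynomial in
theorem Matrix.hasDerivAt_det_add_smul {B : Matrix n n ℝ} (hB : IsUnit B.det)
    (C : Matrix n n ℝ) :
    HasDerivAt (fun s : ℝ => (B + s • C).det) (B.det * (B⁻¹ * C).trace) 0 := by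
  set P := (det (1 + (X : ℝ[X]) • (B⁻¹ * C).map Polynomial.C)).divX.divX
  have hfactor : (fun s : ℝ => (B + s • C).det)
      = fun s => B.det * (1 + (B⁻¹ * C).trace * s + P.eval s * s ^ 2) := funext fun s => by
    rw [← det_one_add_smul, ← det_mul, mul_add, mul_one, mul_smul_comm,
      mul_nonsing_inv_cancel_left _ _ hB]
  have hpoly : HasDerivAt (fun s : ℝ => 1 + (B⁻¹ * C).trace * s + P.eval s * s ^ 2)
      ((B⁻¹ * C).trace) 0 :=
    ((((hasDerivAt_id (0 : ℝ)).const_mul ((B⁻¹ * C).trace)).const_add 1).add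
      ((P.hasDerivAt 0).mul (hasDerivAt_pow 2 0))).congr_deriv (by simp)
  rw [hfactor]
  exact hpoly.const_mul B.det

open scoped Matrix.Norms.Operator in
theorem Matrix.hasDerivAt_dotProduct_inv_add_smul_mulVec {B : Matrix n n ℝ} (hB : IsUnit B.det)
    (C : Matrix n n ℝ) (u v : n → ℝ) :
    HasDerivAt (fun s : ℝ => u ⬝ᵥ (B + s • C)⁻¹ *ᵥ v)
      (-(u ⬝ᵥ (B⁻¹ * C * B⁻¹) *ᵥ v)) 0 := by
  let L : Matrix n n ℝ →L[ℝ] ℝ := LinearMap.toContinuousLinearMap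
    { toFun := fun M => u ⬝ᵥ M *ᵥ v
      map_add' := fun M N => by simp [add_mulVec, dotProduct_add]
      map_smul' := fun c M => by simp [smul_mulVec, dotProduct_smul] }
  obtain ⟨U, rfl⟩ := (isUnit_iff_isUnit_det _).2 hB
  have hinv := (hasFDerivAt_ringInverse (𝕜 := ℝ) U).comp_hasDerivAt_of_eq (0 : ℝ)
    (((hasDerivAt_id (0 : ℝ)).smul_const C).const_add (U : Matrix n n ℝ)) (by simp)
  simp only [nonsing_inv_eq_ringInverse]
  refine (L.hasFDerivAt.comp_hasDerivAt (0 : ℝ) hinv).congr_deriv ?_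
  simp only [Ring.inverse_unit, _root_.neg_apply, one_smul,
    ContinuousLinearMap.mulLeftRight_apply]
  exact L.map_neg _

end Matrix

lemma abs_div_sqrt_le_of_mul_sq_le {a q x c K : ℝ} (hc : 0 < c) (hx : 0 ≤ x)
    (hq : c * x ^ 2 ≤ q) (ha : |a| ≤ K * x ^ 2) : |a| / √q ≤ K / √c * x := by
  rcases hx.eq_or_lt with rfl | hx
  · have : a = 0 := abs_nonpos_iff.1 (by simpa using ha)
    simp [this]
  have hqx : √c * x ≤ √q := by
    rw [← sqrt_sq hx.le, ← sqrt_mul hc.le]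
    exact sqrt_le_sqrt hq
  have hK : 0 ≤ K := nonneg_of_mul_nonneg_left ((abs_nonneg a).trans ha) (by positivity)
  rw [div_le_iff₀ ((by positivity : 0 < √c * x).trans_le hqx)]
  calc |a| ≤ K / √c * x * (√c * x) := by
        rw [show K / √c * x * (√c * x) = K * x ^ 2 by field_simp]; exact ha
    _ ≤ K / √c * x * √q := by gcongr

lemma quadForm_add_smul (B C : Mat3) (s : ℝ) (p : Vec3) :
    quadForm (B + s • C) p = quadForm B p + s * quadForm C p := by
  simp only [quadForm, add_mulVec, smul_mulVec, dotProduct_add, dotProduct_smul, smul_eq_mul]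

lemma quadForm_zero_right (B : Mat3) : quadForm B 0 = 0 := by
  simp [quadForm]

lemma continuous_quadForm (B : Mat3) : Continuous (quadForm B) := by
  unfold quadForm; fun_prop

theorem Matrix.PosDef.exists_mul_norm_sq_le_quadForm_add_smul {B : Mat3} (hB : B.PosDef)
    (C : Mat3) : ∃ c > 0, ∃ ε > 0, ∀ s ∈ Metric.ball (0 : ℝ) ε, ∀ p,
      c * ‖p‖ ^ 2 ≤ quadForm (B + s • C) p := by
  obtain ⟨c, hc, hBp⟩ := hB.exists_pos_mul_norm_sq_le
  set K := ∑ i, ∑ j, |C i j|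
  have hK : 0 ≤ K := by positivity
  refine ⟨c / 2, by positivity, c / (2 * (K + 1)), by positivity, fun s hs p => ?_⟩
  have hs : |s| * K ≤ c / 2 := by
    rw [mem_ball_zero_iff, norm_eq_abs] at hs
    calc |s| * K ≤ c / (2 * (K + 1)) * (K + 1) := by gcongr; linarith
      _ = c / 2 := by field_simp
  have hCp : |s * quadForm C p| ≤ c / 2 * ‖p‖ ^ 2 := by
    rw [abs_mul]
    calc |s| * |quadForm C p| ≤ |s| * (K * ‖p‖ ^ 2) := by
          gcongr; exact abs_dotProduct_mulVec_le C p
      _ ≤ c / 2 * ‖p‖ ^ 2 := by rw [← mul_assoc]; gcongr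
  rw [quadForm_add_smul]
  have hBp' : c * ‖p‖ ^ 2 ≤ quadForm B p := hBp p
  linarith [neg_abs_le (s * quadForm C p)]

section Integral
variable {μ : Measure Vec3} {f : Vec3 → ℝ}

lemma integrable_inv_sqrt_quadForm_mul (hf : Measurable f)
    (hint : Integrable (fun p => ‖p‖ * f p) μ) {B : Mat3} (hB : B.PosDef) (i j : Fin 3) :
    Integrable (fun p => (√(quadForm B p))⁻¹ * (p i * p j * f p)) μ := by
  obtain ⟨c, hc, hBp⟩ := hB.exists_pos_mul_norm_sq_le
  refine (hint.norm.const_mul (1 / √c)).mono'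
    (by have := continuous_quadForm B; fun_prop) (ae_of_all _ fun p => ?_)
  have hij : |p i * p j| ≤ 1 * ‖p‖ ^ 2 := by
    rw [abs_mul, one_mul, sq]
    exact mul_le_mul (norm_le_pi_norm p i) (norm_le_pi_norm p j) (abs_nonneg _) (norm_nonneg p)
  calc ‖(√(quadForm B p))⁻¹ * (p i * p j * f p)‖
        = |p i * p j| / √(quadForm B p) * |f p| := by
        rw [norm_mul, norm_inv, norm_mul, norm_of_nonneg (sqrt_nonneg _), norm_eq_abs,
          norm_eq_abs]
        ring
    _ ≤ 1 / √c * ‖p‖ * |f p| := by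
        gcongr; exact abs_div_sqrt_le_of_mul_sq_le hc (norm_nonneg p) (hBp p) hij
    _ = 1 / √c * ‖‖p‖ * f p‖ := by rw [norm_mul, norm_norm, norm_eq_abs, mul_assoc]

lemma integrable_sqrt_quadForm_mul (hf : Measurable f)
    (hint : Integrable (fun p => ‖p‖ * f p) μ) (B : Mat3) :
    Integrable (fun p => √(quadForm B p) * f p) μ := by
  set K := ∑ i, ∑ j, |B i j|
  refine (hint.norm.const_mul √K).mono'
    ((continuous_quadForm B).measurable.sqrt.mul hf).aestronglyMeasurable (ae_of_all _ fun p => ?_)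
  have hBp : quadForm B p ≤ K * ‖p‖ ^ 2 :=
    (le_abs_self _).trans (abs_dotProduct_mulVec_le B p)
  calc ‖√(quadForm B p) * f p‖ = √(quadForm B p) * |f p| := by
        rw [norm_mul, norm_of_nonneg (sqrt_nonneg _), norm_eq_abs]
    _ ≤ √(K * ‖p‖ ^ 2) * |f p| := by gcongr
    _ = √K * ‖‖p‖ * f p‖ := by
        rw [sqrt_mul (by positivity), sqrt_sq (norm_nonneg p), norm_mul, norm_norm, norm_eq_abs,
          mul_assoc]

lemma hasDerivAt_sqrt_quadForm_add_smul_mul (B C : Mat3) {p : Vec3} {s : ℝ} (y : ℝ)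
    (hpos : p ≠ 0 → 0 < quadForm (B + s • C) p) :
    HasDerivAt (fun s => √(quadForm (B + s • C) p) * y)
      ((√(quadForm (B + s • C) p))⁻¹ * (quadForm C p * y) / 2) s := by
  rcases eq_or_ne p 0 with rfl | hp
  · simpa [quadForm_zero_right] using hasDerivAt_const s (0 : ℝ)
  have hlin : HasDerivAt (fun s : ℝ => quadForm (B + s • C) p) (quadForm C p) s := by
    simp only [quadForm_add_smul]
    simpa using ((hasDerivAt_id s).mul_const (quadForm C p)).const_add (quadForm B p)
  exact ((hlin.sqrt (hpos hp).ne').mul_const y).congr_deriv (by ring)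

theorem hasDerivAt_integral_sqrt_quadForm_add_smul (hf : Measurable f)
    (hint : Integrable (fun p => ‖p‖ * f p) μ) {B : Mat3} (hB : B.PosDef) (C : Mat3) :
    HasDerivAt (fun s : ℝ => ∫ p, √(quadForm (B + s • C) p) * f p ∂μ)
      ((∫ p, (√(quadForm B p))⁻¹ * (quadForm C p * f p) ∂μ) / 2) 0 := by
  obtain ⟨c, hc, ε, hε, hlow⟩ := hB.exists_mul_norm_sq_le_quadForm_add_smul C
  set K := ∑ i, ∑ j, |C i j|
  have hmeas : ∀ M : Mat3, Measurable fun p => √(quadForm M p) := fun M =>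
    (continuous_quadForm M).measurable.sqrt
  have hF'0 : (fun p => (√(quadForm (B + (0 : ℝ) • C) p))⁻¹ * (quadForm C p * f p) / 2)
      = fun p => (√(quadForm B p))⁻¹ * (quadForm C p * f p) / 2 := by simp
  have hbound : ∀ᵐ p ∂μ, ∀ s ∈ Metric.ball (0 : ℝ) ε,
      ‖(√(quadForm (B + s • C) p))⁻¹ * (quadForm C p * f p) / 2‖
        ≤ K / √c / 2 * ‖‖p‖ * f p‖ :=
    ae_of_all _ fun p s hs => calc
      _ = |quadForm C p| / √(quadForm (B + s • C) p) * |f p| / 2 := by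
        rw [norm_div, norm_mul, norm_inv, norm_mul, norm_of_nonneg (sqrt_nonneg _), norm_eq_abs,
          norm_eq_abs, Real.norm_two]
        ring
      _ ≤ K / √c * ‖p‖ * |f p| / 2 := by
        gcongr
        exact abs_div_sqrt_le_of_mul_sq_le hc (norm_nonneg p) (hlow s hs p)
          (abs_dotProduct_mulVec_le C p)
      _ = K / √c / 2 * ‖‖p‖ * f p‖ := by rw [norm_mul, norm_norm, norm_eq_abs]; ring
  have hdiff : ∀ᵐ p ∂μ, ∀ s ∈ Metric.ball (0 : ℝ) ε,
      HasDerivAt (fun s => √(quadForm (B + s • C) p) * f p)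
        ((√(quadForm (B + s • C) p))⁻¹ * (quadForm C p * f p) / 2) s :=
    ae_of_all _ fun p s hs => hasDerivAt_sqrt_quadForm_add_smul_mul B C (f p) fun hp =>
      (by have := norm_pos_iff.2 hp; positivity : 0 < c * ‖p‖ ^ 2).trans_le (hlow s hs p)
  have hF'0_meas : AEStronglyMeasurable
      (fun p => (√(quadForm B p))⁻¹ * (quadForm C p * f p) / 2) μ :=
    ((hmeas B).inv.mul ((continuous_quadForm C).measurable.mul hf)).div_const 2
      |>.aestronglyMeasurable
  have := (hasDerivAt_integral_of_dominated_loc_of_deriv_le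
    (F := fun s p => √(quadForm (B + s • C) p) * f p) (Metric.ball_mem_nhds 0 hε)
    (Eventually.of_forall fun s => ((hmeas _).mul hf).aestronglyMeasurable)
    (by simpa using integrable_sqrt_quadForm_mul hf hint B) (by rwa [hF'0])
    hbound (hint.norm.const_mul _) hdiff).2
  rwa [hF'0, integral_div] at this
end Integral

lemma sum_PsiM_mul {f : Vec3 → ℝ} (hf : Measurable f)
    (hint : Integrable (fun p => ‖p‖ * f p)) {B : Mat3} (hB : B.PosDef) (C : Mat3) :
    ∑ i, ∑ j, PsiM f B i j * C i j
      = 4 * π * √B.det * ∫ p, (√(quadForm B p))⁻¹ * (quadForm C p * f p) := by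
  have hint' := integrable_inv_sqrt_quadForm_mul hf hint hB
  have hexpand : ∀ p, (√(quadForm B p))⁻¹ * (quadForm C p * f p)
      = ∑ i, ∑ j, (√(quadForm B p))⁻¹ * (p i * p j * f p) * C i j := fun p => by
    simp only [quadForm, dotProduct, mulVec, Finset.sum_mul, Finset.mul_sum]
    exact Finset.sum_congr rfl fun i _ => Finset.sum_congr rfl fun j _ => by ring
  have hswap : ∫ p, ∑ i, ∑ j, (√(quadForm B p))⁻¹ * (p i * p j * f p) * C i j
      = ∑ i, ∑ j, (∫ p, (√(quadForm B p))⁻¹ * (p i * p j * f p)) * C i j := by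
    refine (integral_finsetSum _ fun i _ => integrable_finsetSum _ fun j _ =>
      (hint' i j).mul_const _).trans (Finset.sum_congr rfl fun i _ => ?_)
    exact (integral_finsetSum _ fun j _ => (hint' i j).mul_const _).trans
      (Finset.sum_congr rfl fun j _ => integral_mul_const _ _)
  simp_rw [hexpand, hswap, Finset.mul_sum, PsiM, of_apply, mul_assoc]

def fuchsResidual (f : Vec3 → ℝ) (h : Vec3) (B : Mat3) : Mat3 :=
  (2 : ℝ) • PsiM f B - B⁻¹ + (2 / B⁻¹.det) •
    ((h ⬝ᵥ B⁻¹ *ᵥ h) • B⁻¹ - (2 : ℝ) • vecMulVec (B⁻¹ *ᵥ h) (B⁻¹ *ᵥ h))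

section Residual
variable {f : Vec3 → ℝ} {h : Vec3} {B : Mat3}

lemma fuchsResidual_apply (i j : Fin 3) :
    fuchsResidual f h B i j = 2 * PsiM f B i j - B⁻¹ i j + (2 / B⁻¹.det) *
      ((h ⬝ᵥ B⁻¹ *ᵥ h) * B⁻¹ i j - 2 * (B⁻¹ *ᵥ h) i * (B⁻¹ *ᵥ h) j) := by
  simp [fuchsResidual, vecMulVec_apply, mul_assoc]

lemma fuchsCond_iff_fuchsResidual_eq_zero : FuchsCond f h B ↔ fuchsResidual f h B = 0 := by
  rw [FuchsCond, fuchsResidual, ← sub_eq_zero, sub_sub_eq_add_sub, add_sub_right_comm]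

lemma isSymm_PsiM : (PsiM f B).IsSymm := by
  ext i j
  simp only [PsiM, transpose_apply, of_apply]
  congr 2 with p
  ring

lemma isSymm_fuchsResidual (hB : B.IsSymm) : (fuchsResidual f h B).IsSymm :=
  ((isSymm_PsiM.smul _).sub hB.inv).add
    (((hB.inv.smul _).sub ((isSymm_vecMulVec_self _).smul _)).smul _)

lemma sum_sum_fuchsResidual_mul (hB : B.IsSymm) {C : Mat3} (hC : C.IsSymm) :
    ∑ i, ∑ j, fuchsResidual f h B i j * C i j
      = 2 * ∑ i, ∑ j, PsiM f B i j * C i j - (B⁻¹ * C).trace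
        + 2 / B⁻¹.det *
          ((h ⬝ᵥ B⁻¹ *ᵥ h) * (B⁻¹ * C).trace - 2 * (h ⬝ᵥ (B⁻¹ * C * B⁻¹) *ᵥ h)) := by
  rw [sum_sum_mul_apply_eq_trace_mul _ hC, sum_sum_mul_apply_eq_trace_mul _ hC,
    ← trace_vecMulVec_mulVec_mul hB.inv]
  simp only [fuchsResidual, add_mul, sub_mul, smul_mul, trace_add, trace_sub, trace_smul,
    smul_eq_mul]
end Residual

theorem hasDerivAt_Ffun_add_smul {f : Vec3 → ℝ} (hf : Measurable f)
    (hint : Integrable (fun p => ‖p‖ * f p)) (h : Vec3) {B : Mat3} (hB : B.PosDef) {C : Mat3}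
    (hC : C.IsSymm) :
    HasDerivAt (fun s : ℝ => Ffun f h (B + s • C))
      ((√B.det)⁻¹ * ∑ i, ∑ j, fuchsResidual f h B i j * C i j) 0 := by
  have hdet : 0 < B.det := hB.det_pos
  have hr0 : 0 < √B.det := sqrt_pos.2 hdet
  have hsqrt := (hasDerivAt_det_add_smul hdet.ne'.isUnit C).sqrt (by simpa using hdet.ne')
  have hsum := (((hasDerivAt_integral_sqrt_quadForm_add_smul hf hint hB C).const_mul (16 * π)).add
    ((hsqrt.inv (by simpa using hr0.ne')).const_mul 2)).add
    ((hsqrt.mul (hasDerivAt_dotProduct_inv_add_smul_mulVec hdet.ne'.isUnit C h h)).const_mul 4)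
  have hF : (fun s : ℝ => Ffun f h (B + s • C)) = fun s =>
      16 * π * (∫ p, √(quadForm (B + s • C) p) * f p) + 2 * (√(B + s • C).det)⁻¹
        + 4 * (√(B + s • C).det * (h ⬝ᵥ (B + s • C)⁻¹ *ᵥ h)) := by
    funext s; simp only [Ffun, mul_assoc]
  rw [hF]
  refine hsum.congr_deriv ?_
  rw [sum_sum_fuchsResidual_mul (isHermitian_iff_isSymm.1 hB.isHermitian) hC,
    sum_PsiM_mul hf hint hB C, det_nonsing_inv, Ring.inverse_eq_inv']
  simp only [zero_smul, add_zero]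
  have hr : √B.det ^ 2 = B.det := sq_sqrt hdet.le
  set r := √B.det
  rw [← hr]
  field_simp
  ring

lemma norm_le_enorm3 (p : Vec3) : ‖p‖ ≤ enorm3 p :=
  (pi_norm_le_iff_of_nonneg (sqrt_nonneg _)).2 fun i => by
    rw [norm_eq_abs, ← sqrt_sq_eq_abs]
    exact sqrt_le_sqrt (Finset.single_le_sum (fun j _ => sq_nonneg (p j)) (Finset.mem_univ i))

lemma MeasureTheory.Integrable.norm_mul_of_enorm3_mul {μ : Measure Vec3} {f : Vec3 → ℝ}
    (hf : Measurable f) (hint : Integrable (fun p => enorm3 p * f p) μ) :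
    Integrable (fun p => ‖p‖ * f p) μ :=
  hint.mono (continuous_norm.measurable.mul hf).aestronglyMeasurable <| ae_of_all _ fun p => by
    have : 0 ≤ enorm3 p := sqrt_nonneg _
    rw [norm_mul, norm_mul, norm_norm, norm_of_nonneg this]
    exact mul_le_mul_of_nonneg_right (norm_le_enorm3 p) (norm_nonneg _)

theorem Ffun_deriv_and_critical_iff_fuchs_general (f : Vec3 → ℝ) (h : Vec3)
    (hmeas : Measurable f)
    (hint : Integrable (fun p : Vec3 => enorm3 p * f p)) :
    (∀ B : Mat3, B.PosDef → ∀ C : Mat3, C.IsSymm →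
      HasDerivAt (fun s : ℝ => Ffun f h (B + s • C))
        ((Real.sqrt B.det)⁻¹ * ∑ i, ∑ j,
          (2 * PsiM f B i j - (B⁻¹) i j
            + (2 / (B⁻¹).det) * ((h ⬝ᵥ (B⁻¹).mulVec h) * (B⁻¹) i j
              - 2 * (B⁻¹).mulVec h i * (B⁻¹).mulVec h j)) * C i j) 0) ∧
    (∀ B : Mat3, B.PosDef →
      ((∀ C : Mat3, C.IsSymm → HasDerivAt (fun s : ℝ => Ffun f h (B + s • C)) 0 0)
        ↔ FuchsCond f h B)) := by
  have hderiv := fun (B : Mat3) (hB : B.PosDef) (C : Mat3) (hC : C.IsSymm) =>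
    hasDerivAt_Ffun_add_smul hmeas (hint.norm_mul_of_enorm3_mul hmeas) h hB hC
  refine ⟨fun B hB C hC => by simpa only [fuchsResidual_apply] using hderiv B hB C hC,
    fun B hB => ?_⟩
  have hres := isSymm_fuchsResidual (f := f) (h := h) (isHermitian_iff_isSymm.1 hB.isHermitian)
  rw [fuchsCond_iff_fuchsResidual_eq_zero, ← forall_isSymm_sum_sum_mul_eq_zero_iff hres]
  refine forall₂_congr fun C hC => ⟨fun h0 => ?_, fun h0 => ?_⟩
  · simpa [(sqrt_pos.2 hB.det_pos).ne'] using (hderiv B hB C hC).unique h0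
  · simpa [h0] using hderiv B hB C hC

/-- directional derivative of F at a positive definite B in a symmetric
direction C, and criticality ⟺ Fuchsian condition. -/
theorem Ffun_deriv_and_critical_iff_fuchs (f : Vec3 → ℝ) (h : Vec3)
    (hmeas : Measurable f) (hnonneg : ∀ p, 0 ≤ f p)
    (hint : Integrable (fun p : Vec3 => enorm3 p * f p)) :
    (∀ B : Mat3, B.PosDef → ∀ C : Mat3, C.IsSymm →
      HasDerivAt (fun s : ℝ => Ffun f h (B + s • C))
        ((Real.sqrt B.det)⁻¹ * ∑ i, ∑ j,
          (2 * PsiM f B i j - (B⁻¹) i j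
            + (2 / (B⁻¹).det) * ((h ⬝ᵥ (B⁻¹).mulVec h) * (B⁻¹) i j
              - 2 * (B⁻¹).mulVec h i * (B⁻¹).mulVec h j)) * C i j) 0) ∧
    (∀ B : Mat3, B.PosDef →
      ((∀ C : Mat3, C.IsSymm → HasDerivAt (fun s : ℝ => Ffun f h (B + s • C)) 0 0)
        ↔ FuchsCond f h B)) :=
  Ffun_deriv_and_critical_iff_fuchs_general f h hmeas hint
end
end

section
/- Let L be an invertible real 3×3 matrix, D a diagonal real 3×3 matrix, and h ∈ ℝ³. Then the function s ↦ 4 (det(Lᵀ exp(sD) L))^{1/2} · hᵀ (Lᵀ exp(sD) L)⁻¹ h is convex on ℝ (here exp denotes the matrix exponential). -/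
open MeasureTheory Matrix Real Filter Topology Set Asymptotics

noncomputable section

/-!
With exp(sD) = diag(e^{s dᵢ}) and w = L⁻ᵀh one has
(det(Lᵀ exp(sD) L))^{1/2} = |det L| e^{s tr D / 2} and hᵀ(Lᵀ exp(sD) L)⁻¹h = ∑ᵢ wᵢ² e^{-s dᵢ}.
The function is therefore the nonnegative combination ∑ᵢ 4 |det L| wᵢ² e^{(tr D / 2 - dᵢ) s}
of exponentials of linear functions of s.
-/

theorem ConvexOn.finset_sum {𝕜 E β ι : Type*} [Semiring 𝕜] [PartialOrder 𝕜] [AddCommMonoid E]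
    [AddCommMonoid β] [PartialOrder β] [IsOrderedAddMonoid β] [SMul 𝕜 E] [Module 𝕜 β]
    {s : Set E} (hs : Convex 𝕜 s) (t : Finset ι) {f : ι → E → β}
    (hf : ∀ i ∈ t, ConvexOn 𝕜 s (f i)) : ConvexOn 𝕜 s fun x => ∑ i ∈ t, f i x := by
  simp_rw [← Finset.sum_apply]
  exact Finset.sum_induction f (ConvexOn 𝕜 s) (fun _ _ => ConvexOn.add)
    (convexOn_const (0 : β) hs) hf

theorem convexOn_univ_const_mul_exp_mul {c : ℝ} (hc : 0 ≤ c) (a : ℝ) :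
    ConvexOn ℝ univ fun s => c * Real.exp (a * s) := by
  simpa only [Function.comp_apply, LinearMap.mulLeft_apply, smul_eq_mul, preimage_univ] using
    (convexOn_exp.comp_linearMap (LinearMap.mulLeft ℝ a)).smul hc

section

variable {n : Type*} [Fintype n] [DecidableEq n]

theorem Matrix.exp_smul_diagonal (s : ℝ) (d : n → ℝ) :
    NormedSpace.exp (s • diagonal d) = diagonal fun i => Real.exp (s * d i) := by
  rw [← diagonal_smul, exp_diagonal]
  congr 1
  funext i
  rw [Pi.coe_exp, Pi.smul_apply, smul_eq_mul, ← Real.exp_eq_exp_ℝ]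

theorem Matrix.det_transpose_mul_mul {R : Type*} [CommRing R]
    (L M : Matrix n n R) : (Lᵀ * M * L).det = L.det ^ 2 * M.det := by
  rw [det_mul, det_mul, det_transpose]
  ring

theorem Matrix.dotProduct_inv_transpose_mul_diagonal_mul_mulVec {K : Type*} [Field K]
    (L : Matrix n n K) {e : n → K} (he : ∀ i, e i ≠ 0) (h : n → K) :
    h ⬝ᵥ (Lᵀ * diagonal e * L)⁻¹ *ᵥ h = ∑ i, (h ᵥ* L⁻¹) i ^ 2 / e i := by
  have hinv : (diagonal e)⁻¹ = diagonal e⁻¹ := inv_eq_right_inv <| by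
    rw [diagonal_mul_diagonal, ← diagonal_one]
    exact congrArg diagonal (funext fun i => mul_inv_cancel₀ (he i))
  rw [Matrix.mul_inv_rev, Matrix.mul_inv_rev, hinv, ← transpose_nonsing_inv, ← mulVec_mulVec,
    ← mulVec_mulVec, dotProduct_mulVec, mulVec_transpose, dotProduct]
  refine Finset.sum_congr rfl fun i _ => ?_
  rw [mulVec_diagonal, Pi.inv_apply]
  ring

theorem Matrix.sqrt_det_transpose_mul_diagonal_exp_mul (L : Matrix n n ℝ) (d : n → ℝ)
    (s : ℝ) :
    √(Lᵀ * diagonal (fun i => Real.exp (s * d i)) * L).det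
      = |L.det| * Real.exp ((∑ i, d i) / 2 * s) := by
  have hexp : Real.exp (s * ∑ i, d i) = Real.exp ((∑ i, d i) / 2 * s) ^ 2 := by
    rw [← Real.exp_nat_mul]; ring_nf
  rw [det_transpose_mul_mul, det_diagonal, ← Real.exp_sum, ← Finset.mul_sum, hexp, ← mul_pow,
    Real.sqrt_sq_eq_abs, abs_mul, Real.abs_exp]

theorem magnetic_term_diagonal_eq_sum_exp (L : Matrix n n ℝ) (d h : n → ℝ) (s : ℝ) :
    √(Lᵀ * NormedSpace.exp (s • diagonal d) * L).det
        * (h ⬝ᵥ (Lᵀ * NormedSpace.exp (s • diagonal d) * L)⁻¹ *ᵥ h)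
      = ∑ i, |L.det| * (h ᵥ* L⁻¹) i ^ 2 * Real.exp (((∑ j, d j) / 2 - d i) * s) := by
  rw [exp_smul_diagonal, sqrt_det_transpose_mul_diagonal_exp_mul,
    dotProduct_inv_transpose_mul_diagonal_mul_mulVec _ fun _ => (Real.exp_pos _).ne',
    Finset.mul_sum]
  refine Finset.sum_congr rfl fun i _ => ?_
  rw [sub_mul, Real.exp_sub, mul_comm (d i)]
  ring

end

theorem magnetic_term_geodesically_convex_general (L D : Mat3) (h : Vec3)
    (hD : D.IsDiag) :
    ConvexOn ℝ Set.univ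
      (fun s : ℝ => 4 * Real.sqrt (Lᵀ * NormedSpace.exp (s • D) * L).det
        * (h ⬝ᵥ ((Lᵀ * NormedSpace.exp (s • D) * L)⁻¹).mulVec h)) := by
  obtain ⟨d, rfl⟩ : ∃ d, Matrix.diagonal d = D := ⟨_, hD.diagonal_diag⟩
  simp_rw [mul_assoc (4 : ℝ), magnetic_term_diagonal_eq_sum_exp, Finset.mul_sum, ← mul_assoc]
  refine ConvexOn.finset_sum convex_univ _ fun _ _ => ?_
  exact convexOn_univ_const_mul_exp_mul (by positivity) _

/-- geodesic convexity of the magnetic term of F: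
s ↦ 4 (det(Lᵀ exp(sD) L))^{1/2} hᵀ(Lᵀ exp(sD) L)⁻¹h is convex on ℝ. -/
theorem magnetic_term_geodesically_convex (L D : Mat3) (h : Vec3)
    (hL : IsUnit L) (hD : D.IsDiag) :
    ConvexOn ℝ Set.univ
      (fun s : ℝ => 4 * Real.sqrt (Lᵀ * NormedSpace.exp (s • D) * L).det
        * (h ⬝ᵥ ((Lᵀ * NormedSpace.exp (s • D) * L)⁻¹).mulVec h)) :=
  magnetic_term_geodesically_convex_general L D h hD
end
end

section
/- The polynomial function g : ℝ² → ℝ, g(x,y) = 17y⁴ + 8xy² + x² − 17y² − 4x, has exactly three critical points, namely (0, √(1/2)), (0, −√(1/2)) and (2, 0). The two points (0, ±√(1/2)) lie in the open unit disc {(x,y) : x² + y² < 1} and are strict local minima of g, while (2,0) is not a local minimum. In particular, a smooth function on a contractible open set (the open unit disc) can have more than one critical point even though every critical point it has in that set is a local minimum. -/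
open Filter Topology

noncomputable def counterexampleL (a b : ℝ) : ℝ × ℝ →L[ℝ] ℝ :=
  (8 * b ^ 2 + 2 * a - 4) • (ContinuousLinearMap.fst ℝ ℝ ℝ)
    + (68 * b ^ 3 + 16 * a * b - 34 * b) • (ContinuousLinearMap.snd ℝ ℝ ℝ)

lemma counterexampleL_apply (a b : ℝ) (v : ℝ × ℝ) :
    counterexampleL a b v
      = (8 * b ^ 2 + 2 * a - 4) * v.1 + (68 * b ^ 3 + 16 * a * b - 34 * b) * v.2 := by
  simp [counterexampleL]

lemma counterexampleL_eq_zero (a b : ℝ) :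
    counterexampleL a b = 0 ↔
      8 * b ^ 2 + 2 * a - 4 = 0 ∧ 68 * b ^ 3 + 16 * a * b - 34 * b = 0 := by
  constructor
  · intro h
    have e1 := congrArg (fun T : ℝ × ℝ →L[ℝ] ℝ => T (1, 0)) h
    have e2 := congrArg (fun T : ℝ × ℝ →L[ℝ] ℝ => T (0, 1)) h
    simp only [counterexampleL_apply, ContinuousLinearMap.zero_apply] at e1 e2
    constructor
    · linarith [e1]
    · linarith [e2]
  · rintro ⟨k1, k2⟩
    apply ContinuousLinearMap.ext
    intro v
    rw [counterexampleL_apply, k1, k2, ContinuousLinearMap.zero_apply]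
    ring

lemma counterexample_hasD (g : ℝ × ℝ → ℝ)
    (hg : ∀ x y : ℝ, g (x, y) = 17 * y ^ 4 + 8 * x * y ^ 2 + x ^ 2 - 17 * y ^ 2 - 4 * x)
    (a b : ℝ) : HasFDerivAt g (counterexampleL a b) (a, b) := by
  have hgf : g = fun p : ℝ × ℝ =>
      17 * (p.2 * p.2 * (p.2 * p.2)) + 8 * (p.1 * (p.2 * p.2)) + p.1 * p.1
        - 17 * (p.2 * p.2) - 4 * p.1 := by
    funext p
    obtain ⟨x, y⟩ := p
    rw [hg]
    ring
  subst hgf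
  have h1 : HasFDerivAt (fun p : ℝ × ℝ => p.1) (ContinuousLinearMap.fst ℝ ℝ ℝ) (a, b) :=
    hasFDerivAt_fst
  have h2 : HasFDerivAt (fun p : ℝ × ℝ => p.2) (ContinuousLinearMap.snd ℝ ℝ ℝ) (a, b) :=
    hasFDerivAt_snd
  have hb2 := h2.mul h2
  have hb4 := hb2.mul hb2
  have ha2 := h1.mul h1
  have hab2 := h1.mul hb2
  have H := ((((hb4.const_mul 17).add (hab2.const_mul 8)).add ha2).sub
      (hb2.const_mul 17)).sub (h1.const_mul 4)
  refine H.congr_fderiv ?_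
  apply ContinuousLinearMap.ext
  intro v
  rw [counterexampleL_apply]
  simp
  ring

set_option maxHeartbeats 1600000 in
/-- the polynomial g(x,y) = 17y⁴ + 8xy² + x² − 17y² − 4x has exactly the
three critical points (0, √(1/2)), (0, −√(1/2)), (2,0); the first two lie in the open unit
disc and are strict local minima, while (2,0) is not a local minimum. -/
theorem counterexample_critical_points (g : ℝ × ℝ → ℝ)
    (hg : ∀ x y : ℝ, g (x, y) = 17 * y ^ 4 + 8 * x * y ^ 2 + x ^ 2 - 17 * y ^ 2 - 4 * x) :
    {p : ℝ × ℝ | fderiv ℝ g p = 0}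
      = {(0, Real.sqrt (1/2)), (0, -Real.sqrt (1/2)), ((2:ℝ), (0:ℝ))} ∧
    ((0:ℝ) ^ 2 + Real.sqrt (1/2) ^ 2 < 1 ∧ (0:ℝ) ^ 2 + (-Real.sqrt (1/2)) ^ 2 < 1) ∧
    (∀ᶠ q in 𝓝[≠] (((0:ℝ), Real.sqrt (1/2)) : ℝ × ℝ), g ((0:ℝ), Real.sqrt (1/2)) < g q) ∧
    (∀ᶠ q in 𝓝[≠] (((0:ℝ), -Real.sqrt (1/2)) : ℝ × ℝ), g ((0:ℝ), -Real.sqrt (1/2)) < g q) ∧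
    ¬ IsLocalMin g ((2:ℝ), (0:ℝ)) := by
  set c := Real.sqrt (1/2) with hc
  have hc2 : c ^ 2 = 1 / 2 := Real.sq_sqrt (by norm_num)
  have hcpos : 0 < c := Real.sqrt_pos.mpr (by norm_num)
  -- the square-completed form
  have hsq : ∀ x y : ℝ, g (x, y)
      = (x + 4 * y ^ 2 - 2) ^ 2 + (y ^ 2 - 1 / 2) ^ 2 - 17 / 4 := by
    intro x y
    rw [hg]
    ring
  have hfd : ∀ a b : ℝ, fderiv ℝ g (a, b) = counterexampleL a b :=
    fun a b => (counterexample_hasD g hg a b).fderiv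
  refine ⟨?_, ⟨?_, ?_⟩, ?_, ?_, ?_⟩
  · -- critical point set
    ext p
    obtain ⟨a, b⟩ := p
    simp only [Set.mem_setOf_eq, Set.mem_insert_iff, Set.mem_singleton_iff, Prod.mk.injEq]
    rw [hfd a b, counterexampleL_eq_zero]
    constructor
    · rintro ⟨e1, e2⟩
      have hb : b * (2 * b ^ 2 - 1) = 0 := by linear_combination e2 / 2 - 4 * b * e1
      rcases mul_eq_zero.mp hb with hb0 | hb1
      · right; right
        exact ⟨by nlinarith [e1], hb0⟩
      · have hb2 : b ^ 2 = 1 / 2 := by linarith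
        have ha : a = 0 := by nlinarith [e1]
        have : (b - c) * (b + c) = 0 := by nlinarith [hc2, hb2]
        rcases mul_eq_zero.mp this with h' | h'
        · left; exact ⟨ha, by linarith⟩
        · right; left; exact ⟨ha, by linarith⟩
    · rintro (⟨ha, hb⟩ | ⟨ha, hb⟩ | ⟨ha, hb⟩) <;> subst ha <;> subst hb
      · exact ⟨by linear_combination 8 * hc2, by linear_combination 68 * c * hc2⟩
      · exact ⟨by linear_combination 8 * hc2, by linear_combination (-68 * c) * hc2⟩
      · exact ⟨by norm_num, by norm_num⟩
  · simpa [hc2] using (by norm_num : (0:ℝ)^2 + 1/2 < 1)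
  · simpa [hc2] using (by norm_num : (0:ℝ)^2 + 1/2 < 1)
  · -- strict local min at (0, c)
    have hval : g (0, c) = -17 / 4 := by rw [hsq]; nlinarith [hc2]
    have hmem : ∀ᶠ q in 𝓝[≠] ((0, c) : ℝ × ℝ), q ≠ ((0, c) : ℝ × ℝ) :=
      eventually_mem_nhdsWithin
    have hopen : ∀ᶠ q in 𝓝[≠] ((0, c) : ℝ × ℝ), q ≠ ((0, -c) : ℝ × ℝ) := by
      apply eventually_nhdsWithin_of_eventually_nhds
      apply (isOpen_compl_singleton (x := ((0, -c) : ℝ × ℝ))).eventually_mem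
      simp only [Set.mem_compl_iff, Set.mem_singleton_iff, Prod.mk.injEq, not_and]
      intro _
      nlinarith [hcpos]
    filter_upwards [hmem, hopen] with q h1 h2
    rw [hval]
    obtain ⟨x, y⟩ := q
    rw [hsq]
    rcases eq_or_ne (y ^ 2) (1 / 2) with hy | hy
    · have hyc : y = c ∨ y = -c := by
        have : (y - c) * (y + c) = 0 := by nlinarith [hc2]
        rcases mul_eq_zero.mp this with h' | h'
        · left; linarith
        · right; linarith
      have hx : x ≠ 0 := by
        rcases hyc with rfl | rfl
        · intro hx0; exact h1 (by simp [hx0])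
        · intro hx0; exact h2 (by simp [hx0])
      have hx2 : x + 4 * y ^ 2 - 2 ≠ 0 := fun h0 => hx (by linarith [hy])
      nlinarith [sq_pos_of_ne_zero hx2, sq_nonneg (y ^ 2 - 1 / 2)]
    · have : 0 < (y ^ 2 - 1 / 2) ^ 2 := sq_pos_of_ne_zero (sub_ne_zero.mpr hy)
      nlinarith [sq_nonneg (x + 4 * y ^ 2 - 2)]
  · -- strict local min at (0, -c)
    have hval : g (0, -c) = -17 / 4 := by rw [hsq]; nlinarith [hc2]
    have hmem : ∀ᶠ q in 𝓝[≠] ((0, -c) : ℝ × ℝ), q ≠ ((0, -c) : ℝ × ℝ) :=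
      eventually_mem_nhdsWithin
    have hopen : ∀ᶠ q in 𝓝[≠] ((0, -c) : ℝ × ℝ), q ≠ ((0, c) : ℝ × ℝ) := by
      apply eventually_nhdsWithin_of_eventually_nhds
      apply (isOpen_compl_singleton (x := ((0, c) : ℝ × ℝ))).eventually_mem
      simp only [Set.mem_compl_iff, Set.mem_singleton_iff, Prod.mk.injEq, not_and]
      intro _
      nlinarith [hcpos]
    filter_upwards [hmem, hopen] with q h1 h2
    rw [hval]
    obtain ⟨x, y⟩ := q
    rw [hsq]
    rcases eq_or_ne (y ^ 2) (1 / 2) with hy | hy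
    · have hyc : y = c ∨ y = -c := by
        have : (y - c) * (y + c) = 0 := by nlinarith [hc2]
        rcases mul_eq_zero.mp this with h' | h'
        · left; linarith
        · right; linarith
      have hx : x ≠ 0 := by
        rcases hyc with rfl | rfl
        · intro hx0; exact h2 (by simp [hx0])
        · intro hx0; exact h1 (by simp [hx0])
      have hx2 : x + 4 * y ^ 2 - 2 ≠ 0 := fun h0 => hx (by linarith [hy])
      nlinarith [sq_pos_of_ne_zero hx2, sq_nonneg (y ^ 2 - 1 / 2)]
    · have : 0 < (y ^ 2 - 1 / 2) ^ 2 := sq_pos_of_ne_zero (sub_ne_zero.mpr hy)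
      nlinarith [sq_nonneg (x + 4 * y ^ 2 - 2)]
  · -- (2,0) is not a local minimum
    intro h
    have hval : g (2, 0) = -4 := by rw [hsq]; norm_num
    have hφ : Filter.Tendsto (fun t : ℝ => ((2 - 4 * t ^ 2, t) : ℝ × ℝ)) (𝓝 0) (𝓝 (2, 0)) := by
      have hcont : Continuous (fun t : ℝ => ((2 - 4 * t ^ 2, t) : ℝ × ℝ)) := by continuity
      have := hcont.tendsto 0
      simpa using this
    have h2 : ∀ᶠ t in 𝓝 (0 : ℝ), g (2, 0) ≤ g (2 - 4 * t ^ 2, t) := hφ.eventually h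
    have h3 : ∀ᶠ t in 𝓝 (0 : ℝ), |t| < 1 := by
      have : Set.Ioo (-1 : ℝ) 1 ∈ 𝓝 (0 : ℝ) := Ioo_mem_nhds (by norm_num) (by norm_num)
      filter_upwards [this] with t ht
      rw [abs_lt]; exact ⟨ht.1, ht.2⟩
    have h4 : ∀ᶠ t in 𝓝[≠] (0 : ℝ), g (2, 0) ≤ g (2 - 4 * t ^ 2, t) ∧ |t| < 1 :=
      eventually_nhdsWithin_of_eventually_nhds (h2.and h3)
    have h5 := h4.and eventually_mem_nhdsWithin
    obtain ⟨t, ⟨hle, ht1⟩, ht0⟩ := h5.exists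
    rw [hval, hsq] at hle
    have ht0' : t ≠ 0 := ht0
    have htpos : 0 < t ^ 2 := by positivity
    have htlt : t ^ 2 < 1 := by nlinarith [abs_nonneg t, sq_abs t]
    nlinarith [hle, htpos, htlt]
end

section
/- Let f : ℝ³ → [0,∞) be measurable with ∫_{ℝ³} |p| f(p) dp < ∞ and let h ∈ ℝ³. Suppose that for all i, j ∈ {1,2,3}: 8π ∫_{ℝ³} |p|^{−1} p_i p_j f(p) dp = (1 − 2‖h‖²) δ_{ij} + 4 h_i h_j (the Fuchsian condition in a basis where the metric is the identity). Define the linear map T : Sym3 → Sym3 by T(K)_{ij} = 4π ∫_{ℝ³} |p|^{−3} (pᵀKp) p_i p_j f(p) dp. Then T is self-adjoint with respect to the Frobenius inner product on Sym3, and every eigenvalue μ of T satisfies |μ| ≤ 1/2 + ‖h‖². -/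
open MeasureTheory Matrix Real Filter Topology Set Asymptotics

noncomputable section

set_option linter.unusedVariables false

lemma enorm3_nonneg (p : Vec3) : 0 ≤ enorm3 p := Real.sqrt_nonneg _

lemma enorm3_sq (p : Vec3) : enorm3 p ^ 2 = ∑ i, p i ^ 2 :=
  Real.sq_sqrt (Finset.sum_nonneg fun i _ => sq_nonneg _)

lemma abs_le_enorm3 (p : Vec3) (i : Fin 3) : |p i| ≤ enorm3 p := by
  rw [← Real.sqrt_sq_eq_abs]
  exact Real.sqrt_le_sqrt (Finset.single_le_sum (fun j _ => sq_nonneg (p j)) (Finset.mem_univ i))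

lemma enorm3_eq_zero {p : Vec3} (hp : enorm3 p = 0) (i : Fin 3) : p i = 0 := by
  have h1 := abs_le_enorm3 p i
  rw [hp] at h1
  exact abs_eq_zero.mp (le_antisymm h1 (abs_nonneg _))

lemma enorm3_measurable : Measurable enorm3 := by
  apply Continuous.measurable
  unfold enorm3
  exact Real.continuous_sqrt.comp (continuous_finset_sum _ fun i _ => (continuous_apply i).pow 2)

lemma quadForm_row (K : Mat3) (p : Vec3) :
    quadForm K p = ∑ l, p l * (∑ m, K l m * p m) := by
  simp [quadForm, dotProduct, Matrix.mulVec]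

lemma quadForm_eq (B : Mat3) (p : Vec3) :
    quadForm B p = ∑ i, ∑ j, B i j * (p i * p j) := by
  rw [quadForm_row]
  simp only [Finset.mul_sum]
  exact Finset.sum_congr rfl fun i _ => Finset.sum_congr rfl fun j _ => by ring

lemma quadForm_measurable (B : Mat3) : Measurable fun p => quadForm B p := by
  simp only [quadForm_eq]
  exact Finset.measurable_sum _ fun i _ => Finset.measurable_sum _ fun j _ =>
    measurable_const.mul ((measurable_pi_apply i).mul (measurable_pi_apply j))

lemma quadForm_abs_le (B : Mat3) (p : Vec3) :
    |quadForm B p| ≤ (∑ i, ∑ j, |B i j|) * enorm3 p ^ 2 := by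
  rw [quadForm_eq, Finset.sum_mul]
  refine (Finset.abs_sum_le_sum_abs _ _).trans (Finset.sum_le_sum fun i _ => ?_)
  rw [Finset.sum_mul]
  refine (Finset.abs_sum_le_sum_abs _ _).trans (Finset.sum_le_sum fun j _ => ?_)
  rw [abs_mul, abs_mul]
  have h1 : |p i| * |p j| ≤ enorm3 p ^ 2 := by
    have := mul_le_mul (abs_le_enorm3 p i) (abs_le_enorm3 p j) (abs_nonneg _) (enorm3_nonneg p)
    nlinarith
  exact mul_le_mul_of_nonneg_left h1 (abs_nonneg _)

lemma inv_mul_sq' (x : ℝ) : x⁻¹ * x ^ 2 = x := by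
  rcases eq_or_ne x 0 with h | h
  · simp [h]
  · field_simp

lemma inv_cube_mul (x : ℝ) : x⁻¹ ^ 3 * x ^ 4 = x := by
  rcases eq_or_ne x 0 with h | h
  · simp [h]
  · field_simp

lemma integrable_of_bound (f : Vec3 → ℝ) (hint : Integrable fun p : Vec3 => enorm3 p * f p)
    (g : Vec3 → ℝ) (hg : Measurable g) (C : ℝ)
    (hb : ∀ p, |g p| ≤ C * (enorm3 p * f p)) : Integrable g :=
  (hint.const_mul C).mono' hg.aestronglyMeasurable (ae_of_all _ fun p => by
    simpa [Real.norm_eq_abs] using hb p)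

section IntAux
variable {f : Vec3 → ℝ}

lemma int_pp (hmeas : Measurable f) (hnonneg : ∀ p, 0 ≤ f p)
    (hint : Integrable fun p : Vec3 => enorm3 p * f p) (i j : Fin 3) :
    Integrable fun p : Vec3 => (enorm3 p)⁻¹ * (p i * p j * f p) := by
  refine integrable_of_bound f hint _ ?_ 1 ?_
  · exact enorm3_measurable.inv.mul
      (((measurable_pi_apply i).mul (measurable_pi_apply j)).mul hmeas)
  · intro p
    have hN := enorm3_nonneg p
    have hNi : (0:ℝ) ≤ (enorm3 p)⁻¹ := inv_nonneg.mpr hN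
    have hf := hnonneg p
    rw [one_mul, abs_mul, abs_mul, abs_mul, abs_inv, abs_of_nonneg hN, abs_of_nonneg hf]
    calc (enorm3 p)⁻¹ * (|p i| * |p j| * f p)
        ≤ (enorm3 p)⁻¹ * (enorm3 p * enorm3 p * f p) := by
          apply mul_le_mul_of_nonneg_left _ hNi
          apply mul_le_mul_of_nonneg_right _ hf
          exact mul_le_mul (abs_le_enorm3 p i) (abs_le_enorm3 p j) (abs_nonneg _) hN
      _ = (enorm3 p)⁻¹ * enorm3 p ^ 2 * f p := by ring
      _ = enorm3 p * f p := by rw [inv_mul_sq']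

lemma int_qpp (hmeas : Measurable f) (hnonneg : ∀ p, 0 ≤ f p)
    (hint : Integrable fun p : Vec3 => enorm3 p * f p) (K : Mat3) (i j : Fin 3) :
    Integrable fun p : Vec3 => ((enorm3 p)⁻¹ ^ 3) * (quadForm K p * (p i * p j * f p)) := by
  set C := ∑ a, ∑ b, |K a b| with hCdef
  have hC : 0 ≤ C := Finset.sum_nonneg fun a _ => Finset.sum_nonneg fun b _ => abs_nonneg _
  refine integrable_of_bound f hint _ ?_ C ?_
  · exact (enorm3_measurable.inv.pow_const 3).mul ((quadForm_measurable K).mul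
      (((measurable_pi_apply i).mul (measurable_pi_apply j)).mul hmeas))
  · intro p
    have hN := enorm3_nonneg p
    have hNi : (0:ℝ) ≤ (enorm3 p)⁻¹ ^ 3 := by positivity
    have hf := hnonneg p
    rw [abs_mul, abs_mul, abs_mul, abs_mul, abs_pow, abs_inv, abs_of_nonneg hN,
      abs_of_nonneg hf]
    calc (enorm3 p)⁻¹ ^ 3 * (|quadForm K p| * (|p i| * |p j| * f p))
        ≤ (enorm3 p)⁻¹ ^ 3 * ((C * enorm3 p ^ 2) * (enorm3 p * enorm3 p * f p)) := by
          apply mul_le_mul_of_nonneg_left _ hNi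
          refine mul_le_mul (quadForm_abs_le K p) ?_ ?_ ?_
          · apply mul_le_mul_of_nonneg_right _ hf
            exact mul_le_mul (abs_le_enorm3 p i) (abs_le_enorm3 p j) (abs_nonneg _) hN
          · exact mul_nonneg (mul_nonneg (abs_nonneg _) (abs_nonneg _)) hf
          · exact mul_nonneg hC (pow_nonneg hN 2)
      _ = C * ((enorm3 p)⁻¹ ^ 3 * enorm3 p ^ 4 * f p) := by ring
      _ = C * (enorm3 p * f p) := by rw [inv_cube_mul]

lemma int_sq (hmeas : Measurable f) (hnonneg : ∀ p, 0 ≤ f p)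
    (hint : Integrable fun p : Vec3 => enorm3 p * f p) (K : Mat3) :
    Integrable fun p : Vec3 => ((enorm3 p)⁻¹ ^ 3) * (quadForm K p * (quadForm K p * f p)) := by
  set C := ∑ a, ∑ b, |K a b| with hCdef
  have hC : 0 ≤ C := Finset.sum_nonneg fun a _ => Finset.sum_nonneg fun b _ => abs_nonneg _
  refine integrable_of_bound f hint _ ?_ (C * C) ?_
  · exact (enorm3_measurable.inv.pow_const 3).mul ((quadForm_measurable K).mul
      ((quadForm_measurable K).mul hmeas))
  · intro p
    have hN := enorm3_nonneg p
    have hNi : (0:ℝ) ≤ (enorm3 p)⁻¹ ^ 3 := by positivity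
    have hf := hnonneg p
    rw [abs_mul, abs_mul, abs_mul, abs_pow, abs_inv, abs_of_nonneg hN, abs_of_nonneg hf]
    calc (enorm3 p)⁻¹ ^ 3 * (|quadForm K p| * (|quadForm K p| * f p))
        ≤ (enorm3 p)⁻¹ ^ 3 * ((C * enorm3 p ^ 2) * ((C * enorm3 p ^ 2) * f p)) := by
          apply mul_le_mul_of_nonneg_left _ hNi
          refine mul_le_mul (quadForm_abs_le K p) ?_ ?_ ?_
          · exact mul_le_mul_of_nonneg_right (quadForm_abs_le K p) hf
          · exact mul_nonneg (abs_nonneg _) hf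
          · exact mul_nonneg hC (pow_nonneg hN 2)
      _ = (C * C) * ((enorm3 p)⁻¹ ^ 3 * enorm3 p ^ 4 * f p) := by ring
      _ = (C * C) * (enorm3 p * f p) := by rw [inv_cube_mul]

lemma abs_row_le (K : Mat3) (l : Fin 3) (p : Vec3) :
    |∑ m, K l m * p m| ≤ (∑ m, |K l m|) * enorm3 p := by
  rw [Finset.sum_mul]
  refine (Finset.abs_sum_le_sum_abs _ _).trans (Finset.sum_le_sum fun m _ => ?_)
  rw [abs_mul]
  exact mul_le_mul_of_nonneg_left (abs_le_enorm3 p m) (abs_nonneg _)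

lemma int_w (hmeas : Measurable f) (hnonneg : ∀ p, 0 ≤ f p)
    (hint : Integrable fun p : Vec3 => enorm3 p * f p) (K : Mat3) (l : Fin 3) :
    Integrable fun p : Vec3 => (enorm3 p)⁻¹ * ((∑ m, K l m * p m) ^ 2 * f p) := by
  set D := ∑ m, |K l m| with hDdef
  have hD : 0 ≤ D := Finset.sum_nonneg fun m _ => abs_nonneg _
  refine integrable_of_bound f hint _ ?_ (D * D) ?_
  · refine enorm3_measurable.inv.mul (Measurable.mul ?_ hmeas)
    exact (Finset.measurable_sum _ fun m _ => measurable_const.mul (measurable_pi_apply m)).pow_const 2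
  · intro p
    have hN := enorm3_nonneg p
    have hNi : (0:ℝ) ≤ (enorm3 p)⁻¹ := inv_nonneg.mpr hN
    have hf := hnonneg p
    have hw : (∑ m, K l m * p m) ^ 2 ≤ (D * enorm3 p) ^ 2 := by
      nlinarith [abs_row_le K l p, abs_nonneg (∑ m, K l m * p m),
        sq_abs (∑ m, K l m * p m)]
    rw [abs_mul, abs_mul, abs_inv, abs_of_nonneg hN, abs_of_nonneg hf,
      abs_of_nonneg (sq_nonneg _)]
    calc (enorm3 p)⁻¹ * ((∑ m, K l m * p m) ^ 2 * f p)
        ≤ (enorm3 p)⁻¹ * ((D * enorm3 p) ^ 2 * f p) := by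
          exact mul_le_mul_of_nonneg_left (mul_le_mul_of_nonneg_right hw hf) hNi
      _ = (D * D) * ((enorm3 p)⁻¹ * enorm3 p ^ 2 * f p) := by ring
      _ = (D * D) * (enorm3 p * f p) := by rw [inv_mul_sq']

lemma sum_T_eq (hmeas : Measurable f) (hnonneg : ∀ p, 0 ≤ f p)
    (hint : Integrable fun p : Vec3 => enorm3 p * f p) (K K' : Mat3) :
    ∑ i, ∑ j, (4 * Real.pi * ∫ p : Vec3, ((enorm3 p)⁻¹ ^ 3) * (quadForm K p * (p i * p j * f p))) * K' i j
      = 4 * Real.pi * ∫ p : Vec3, ((enorm3 p)⁻¹ ^ 3) * (quadForm K p * (quadForm K' p * f p)) := by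
  have hInt : ∀ i j : Fin 3, Integrable fun p : Vec3 =>
      (4 * Real.pi * K' i j) * (((enorm3 p)⁻¹ ^ 3) * (quadForm K p * (p i * p j * f p))) :=
    fun i j => (int_qpp hmeas hnonneg hint K i j).const_mul _
  have step1 : ∀ i j : Fin 3,
      (4 * Real.pi * ∫ p : Vec3, ((enorm3 p)⁻¹ ^ 3) * (quadForm K p * (p i * p j * f p))) * K' i j
      = ∫ p : Vec3, (4 * Real.pi * K' i j) * (((enorm3 p)⁻¹ ^ 3) * (quadForm K p * (p i * p j * f p))) := by
    intro i j; rw [MeasureTheory.integral_const_mul]; ring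
  simp only [step1]
  have step2 : ∀ i : Fin 3,
      ∑ j, ∫ p : Vec3, (4 * Real.pi * K' i j) * (((enorm3 p)⁻¹ ^ 3) * (quadForm K p * (p i * p j * f p)))
      = ∫ p : Vec3, ∑ j, (4 * Real.pi * K' i j) * (((enorm3 p)⁻¹ ^ 3) * (quadForm K p * (p i * p j * f p))) :=
    fun i => (MeasureTheory.integral_finset_sum _ fun j _ => hInt i j).symm
  simp only [step2]
  rw [← MeasureTheory.integral_finset_sum _
    (fun i _ => integrable_finset_sum _ fun j _ => hInt i j)]
  have pw : (fun p : Vec3 => ∑ i, ∑ j,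
      (4 * Real.pi * K' i j) * (((enorm3 p)⁻¹ ^ 3) * (quadForm K p * (p i * p j * f p))))
      = fun p : Vec3 => 4 * Real.pi * (((enorm3 p)⁻¹ ^ 3) * (quadForm K p * (quadForm K' p * f p))) := by
    funext p
    rw [quadForm_eq K' p]
    simp only [Fin.sum_univ_three]
    ring
  rw [pw, MeasureTheory.integral_const_mul]
end IntAux

/-- in a basis where the metric is the identity and the Fuchsian condition
holds, the operator T(K)_{ij} = 4π ∫ |p|⁻³ (pᵀKp) p_i p_j f dp is Frobenius self-adjoint
on symmetric matrices and its eigenvalues μ satisfy |μ| ≤ 1/2 + ‖h‖². -/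
theorem chi_eigenvalue_bound (f : Vec3 → ℝ) (h : Vec3)
    (hmeas : Measurable f) (hnonneg : ∀ p, 0 ≤ f p)
    (hint : Integrable (fun p : Vec3 => enorm3 p * f p))
    (hFuchs : ∀ i j, 8 * π * (∫ p : Vec3, (enorm3 p)⁻¹ * (p i * p j * f p))
      = (1 - 2 * ∑ l, h l ^ 2) * (if i = j then (1:ℝ) else 0) + 4 * h i * h j)
    (T : Mat3 → Mat3)
    (hT : ∀ K : Mat3, ∀ i j, T K i j
      = 4 * π * ∫ p : Vec3, ((enorm3 p)⁻¹ ^ 3) * (quadForm K p * (p i * p j * f p))) :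
    (∀ K K' : Mat3, K.IsSymm → K'.IsSymm →
      ∑ i, ∑ j, T K i j * K' i j = ∑ i, ∑ j, K i j * T K' i j) ∧
    (∀ (μ : ℝ) (K : Mat3), K.IsSymm → K ≠ 0 → T K = μ • K →
      |μ| ≤ 1/2 + ∑ l, h l ^ 2) := by
  constructor
  · -- self-adjointness
    intro K K' _ _
    have e1 : ∑ i, ∑ j, T K i j * K' i j
        = 4 * π * ∫ p : Vec3, ((enorm3 p)⁻¹ ^ 3) * (quadForm K p * (quadForm K' p * f p)) := by
      simp only [hT]
      exact sum_T_eq hmeas hnonneg hint K K'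
    have e2 : ∑ i, ∑ j, K i j * T K' i j
        = 4 * π * ∫ p : Vec3, ((enorm3 p)⁻¹ ^ 3) * (quadForm K' p * (quadForm K p * f p)) := by
      have hcomm : ∑ i, ∑ j, K i j * T K' i j = ∑ i, ∑ j, T K' i j * K i j :=
        Finset.sum_congr rfl fun i _ => Finset.sum_congr rfl fun j _ => mul_comm _ _
      rw [hcomm]
      simp only [hT]
      exact sum_T_eq hmeas hnonneg hint K' K
    rw [e1, e2]
    congr 1
    apply MeasureTheory.integral_congr_ae
    refine Filter.Eventually.of_forall fun p => ?_
    ring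
  · -- eigenvalue bound
    intro μ K _ hK0 hTK
    set H := ∑ l, h l ^ 2 with hHdef
    have hHnn : 0 ≤ H := Finset.sum_nonneg fun l _ => sq_nonneg _
    set S := ∑ i, ∑ j, K i j ^ 2 with hSdef
    have hS : 0 < S := by
      obtain ⟨i, j, hij⟩ : ∃ i j, K i j ≠ 0 := by
        by_contra hc; push_neg at hc
        exact hK0 (by ext a b; simpa using hc a b)
      have h1 : 0 < K i j ^ 2 := by positivity
      have h2 : K i j ^ 2 ≤ ∑ j', K i j' ^ 2 :=
        Finset.single_le_sum (f := fun j' => K i j' ^ 2)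
          (fun a _ => sq_nonneg _) (Finset.mem_univ j)
      have h3 : (∑ j', K i j' ^ 2) ≤ S :=
        Finset.single_le_sum (fun a (_ : a ∈ Finset.univ) =>
          Finset.sum_nonneg fun b _ => sq_nonneg (K a b)) (Finset.mem_univ i)
      linarith
    have hμS : μ * S
        = 4 * π * ∫ p : Vec3, ((enorm3 p)⁻¹ ^ 3) * (quadForm K p * (quadForm K p * f p)) := by
      have lhs : ∑ i, ∑ j, T K i j * K i j = μ * S := by
        simp only [hTK, Matrix.smul_apply, smul_eq_mul, hSdef, Finset.mul_sum]
        exact Finset.sum_congr rfl fun i _ => Finset.sum_congr rfl fun j _ => by ring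
      rw [← lhs]
      simp only [hT]
      exact sum_T_eq hmeas hnonneg hint K K
    have hμnn : 0 ≤ μ := by
      have h0 : 0 ≤ μ * S := by
        rw [hμS]
        apply mul_nonneg (by positivity)
        refine MeasureTheory.integral_nonneg fun p => ?_
        simp only [Pi.zero_apply]
        have hNi : (0:ℝ) ≤ (enorm3 p)⁻¹ ^ 3 :=
          pow_nonneg (inv_nonneg.mpr (enorm3_nonneg p)) 3
        nlinarith [mul_nonneg hNi (mul_nonneg (sq_nonneg (quadForm K p)) (hnonneg p))]
      exact (mul_nonneg_iff_of_pos_right hS).mp h0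
    -- compare with G2
    have hG1int : Integrable fun p : Vec3 =>
        ((enorm3 p)⁻¹ ^ 3) * (quadForm K p * (quadForm K p * f p)) :=
      int_sq hmeas hnonneg hint K
    have hG2term : ∀ l : Fin 3, Integrable fun p : Vec3 =>
        (enorm3 p)⁻¹ * ((∑ m, K l m * p m) ^ 2 * f p) := int_w hmeas hnonneg hint K
    have hG2int : Integrable fun p : Vec3 =>
        ∑ l, (enorm3 p)⁻¹ * ((∑ m, K l m * p m) ^ 2 * f p) :=
      integrable_finset_sum _ fun l _ => hG2term l
    have hle : (∫ p : Vec3, ((enorm3 p)⁻¹ ^ 3) * (quadForm K p * (quadForm K p * f p)))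
        ≤ ∫ p : Vec3, ∑ l, (enorm3 p)⁻¹ * ((∑ m, K l m * p m) ^ 2 * f p) := by
      apply MeasureTheory.integral_mono hG1int hG2int
      intro p
      rcases eq_or_ne (enorm3 p) 0 with h0 | h0
      · have hp : ∀ i, p i = 0 := enorm3_eq_zero h0
        simp [h0, hp, quadForm_row]
      · have hCS : (quadForm K p) ^ 2 ≤ enorm3 p ^ 2 * ∑ l, (∑ m, K l m * p m) ^ 2 := by
          rw [quadForm_row, enorm3_sq]
          exact Finset.sum_mul_sq_le_sq_mul_sq _ _ _
        have he : (enorm3 p)⁻¹ ^ 3 * enorm3 p ^ 2 = (enorm3 p)⁻¹ := by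
          field_simp
        calc ((enorm3 p)⁻¹ ^ 3) * (quadForm K p * (quadForm K p * f p))
            = ((enorm3 p)⁻¹ ^ 3) * ((quadForm K p) ^ 2 * f p) := by ring
          _ ≤ ((enorm3 p)⁻¹ ^ 3) * ((enorm3 p ^ 2 * ∑ l, (∑ m, K l m * p m) ^ 2) * f p) := by
              exact mul_le_mul_of_nonneg_left
                (mul_le_mul_of_nonneg_right hCS (hnonneg p))
                (pow_nonneg (inv_nonneg.mpr (enorm3_nonneg p)) 3)
          _ = ((enorm3 p)⁻¹ ^ 3 * enorm3 p ^ 2) * ((∑ l, (∑ m, K l m * p m) ^ 2) * f p) := by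
              ring
          _ = (enorm3 p)⁻¹ * ((∑ l, (∑ m, K l m * p m) ^ 2) * f p) := by rw [he]
          _ = ∑ l, (enorm3 p)⁻¹ * ((∑ m, K l m * p m) ^ 2 * f p) := by
              rw [Finset.sum_mul, Finset.mul_sum]
    -- evaluate ∫ G2 using the Fuchsian condition
    have hπ : (8:ℝ) * π ≠ 0 := by positivity
    have hJ : ∀ m m' : Fin 3, (∫ p : Vec3, (enorm3 p)⁻¹ * (p m * p m' * f p))
        = ((1 - 2 * H) * (if m = m' then (1:ℝ) else 0) + 4 * h m * h m') / (8 * π) := by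
      intro m m'
      rw [eq_div_iff hπ]
      have := hFuchs m m'
      linarith [this]
    have hterm : ∀ l : Fin 3, (∫ p : Vec3, (enorm3 p)⁻¹ * ((∑ m, K l m * p m) ^ 2 * f p))
        = ∑ m, ∑ m', (K l m * K l m') *
            (((1 - 2 * H) * (if m = m' then (1:ℝ) else 0) + 4 * h m * h m') / (8 * π)) := by
      intro l
      have pw : (fun p : Vec3 => (enorm3 p)⁻¹ * ((∑ m, K l m * p m) ^ 2 * f p))
          = fun p : Vec3 => ∑ m, ∑ m',
              (K l m * K l m') * ((enorm3 p)⁻¹ * (p m * p m' * f p)) := by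
        funext p
        simp only [Fin.sum_univ_three]
        ring
      rw [pw]
      rw [MeasureTheory.integral_finset_sum _ (fun m _ =>
        integrable_finset_sum _ fun m' _ => (int_pp hmeas hnonneg hint m m').const_mul _)]
      refine Finset.sum_congr rfl fun m _ => ?_
      rw [MeasureTheory.integral_finset_sum _ (fun m' _ =>
        (int_pp hmeas hnonneg hint m m').const_mul _)]
      refine Finset.sum_congr rfl fun m' _ => ?_
      rw [MeasureTheory.integral_const_mul, hJ m m']
    have hG2val : 4 * π * (∫ p : Vec3, ∑ l, (enorm3 p)⁻¹ * ((∑ m, K l m * p m) ^ 2 * f p))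
        = ∑ l, ((1 - 2 * H) / 2 * (∑ m, K l m ^ 2) + 2 * (∑ m, K l m * h m) ^ 2) := by
      rw [MeasureTheory.integral_finset_sum _ fun l _ => hG2term l, Finset.mul_sum]
      refine Finset.sum_congr rfl fun l _ => ?_
      rw [hterm l]
      have hπ' : π ≠ 0 := Real.pi_ne_zero
      simp only [Fin.sum_univ_three, Fin.isValue]
      simp only [show ((0:Fin 3) = 1) = False by simp, show ((0:Fin 3) = 2) = False by simp,
        show ((1:Fin 3) = 0) = False by simp, show ((1:Fin 3) = 2) = False by simp,
        show ((2:Fin 3) = 0) = False by simp, show ((2:Fin 3) = 1) = False by simp,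
        if_true, if_false, eq_self_iff_true]
      field_simp
      ring
    -- final estimate
    have hup : μ * S ≤ (1/2 + H) * S := by
      have h1 : μ * S ≤ ∑ l, ((1 - 2 * H) / 2 * (∑ m, K l m ^ 2) + 2 * (∑ m, K l m * h m) ^ 2) := by
        rw [hμS, ← hG2val]
        exact mul_le_mul_of_nonneg_left hle (by positivity)
      have h3 : (∑ l, ((1 - 2 * H) / 2 * (∑ m, K l m ^ 2) + 2 * (∑ m, K l m * h m) ^ 2))
          ≤ (1/2 + H) * S := by
        have hmul : (1/2 + H) * S = ∑ l, (1/2 + H) * (∑ m, K l m ^ 2) := by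
          rw [hSdef]; exact Finset.mul_sum _ _ _
        rw [hmul]
        refine Finset.sum_le_sum fun l _ => ?_
        have h2 : (∑ m, K l m * h m) ^ 2 ≤ (∑ m, K l m ^ 2) * H :=
          Finset.sum_mul_sq_le_sq_mul_sq _ _ _
        nlinarith [h2]
      linarith
    rw [abs_of_nonneg hμnn]
    exact le_of_mul_le_mul_right (by linarith [hup]) hS
end
end
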